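/- Let G be a biclique graph (with G ≠ K3, G ≠ diamond), and let A = { N[v] : v ∈ V(G), deg(v) = 2 } be the family of closed neighborhoods of the degree-2 vertices of G. Then A is a Helly family: every subfamily of pairwise intersecting members has a common element. -/

import Mathlib

open SimpleGraph

variable {V : Type*}

/-- `S` is the vertex set of an induced complete bipartite subgraph of `G`. -/
def IsCompleteBipartiteSet (G : SimpleGraph V) (S : Set V) : Prop :=
  ∃ X Y : Set V, X.Nonempty ∧ Y.Nonempty ∧ S = X ∪ Y ∧ Disjoint X Y ∧
    ∀ a ∈ S, ∀ b ∈ S, (G.Adj a b ↔ ((a ∈ X ∧ b ∈ Y) ∨ (a ∈ Y ∧ b ∈ X)))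

/-- A biclique of `G`: a maximal induced complete bipartite subgraph,
identified with its vertex set. -/
def IsBiclique (G : SimpleGraph V) (S : Set V) : Prop :=
  IsCompleteBipartiteSet G S ∧
    ∀ T : Set V, IsCompleteBipartiteSet G T → S ⊆ T → T = S

/-- The biclique graph `KB(G)`: the intersection graph of the bicliques of `G`. -/
def KB (G : SimpleGraph V) : SimpleGraph {S : Set V // IsBiclique G S} where
  Adj A B := A ≠ B ∧ (A.1 ∩ B.1).Nonempty
  symm := by
    constructor
    intro A B h
    exact ⟨Ne.symm h.1, by rw [Set.inter_comm]; exact h.2⟩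
  loopless := by
    constructor
    intro A h
    exact h.1 rfl

/-- The distance between two bicliques (vertex sets) of `G`:
`min { d_G(b,b') : b ∈ B, b' ∈ B' }`. -/
noncomputable def bicliqueDist (G : SimpleGraph V) (B B' : Set V) : ℕ :=
  sInf {k : ℕ | ∃ b ∈ B, ∃ b' ∈ B', G.dist b b' = k}

/-- The diamond: `K4` minus an edge (the edge between vertices 2 and 3 is missing). -/
def diamondGraph : SimpleGraph (Fin 4) :=
  SimpleGraph.fromEdgeSet {s(0, 1), s(0, 2), s(0, 3), s(1, 2), s(1, 3)}

/-- The Hajós graph: a triangle `0,1,2` plus vertices `3,4,5`, where `3` is adjacent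
to exactly `0,1`, `4` to exactly `1,2`, and `5` to exactly `2,0`. -/
def hajosGraph : SimpleGraph (Fin 6) :=
  SimpleGraph.fromEdgeSet
    {s(0, 1), s(1, 2), s(0, 2), s(3, 0), s(3, 1), s(4, 1), s(4, 2), s(5, 2), s(5, 0)}

/-- A two-element set is always a complete bipartite set. -/
lemma pair_isCompleteBipartiteSet {W : Type*} (H : SimpleGraph W) {u t : W} (hne : u ≠ t)
    (h : H.Adj u t) :
    IsCompleteBipartiteSet H {u, t} := by
  refine ⟨{u}, {t}, Set.singleton_nonempty _, Set.singleton_nonempty _,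
    by rw [Set.singleton_union], by simp [hne], ?_⟩
  intro p hp q hq
  simp only [Set.mem_insert_iff, Set.mem_singleton_iff] at hp hq ⊢
  rcases hp with rfl | rfl <;> rcases hq with rfl | rfl
  · exact iff_of_false (H.irrefl) (by simp [hne])
  · exact iff_of_true h (by simp)
  · exact iff_of_true h.symm (by simp)
  · exact iff_of_false (H.irrefl) (by simp [hne.symm])
/-- Every complete bipartite set of a finite graph extends to a biclique. -/
lemma exists_biclique_superset {W : Type*} [Fintype W] (H : SimpleGraph W) {S : Set W}
    (hS : IsCompleteBipartiteSet H S) : ∃ T, S ⊆ T ∧ IsBiclique H T := by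
  classical
  have hfin : ({T : Set W | IsCompleteBipartiteSet H T ∧ S ⊆ T}).Finite := Set.toFinite _
  obtain ⟨T, hT, hmax0⟩ := hfin.exists_maximalFor id _ ⟨S, hS, subset_rfl⟩
  have hmax : ∀ T' ∈ {T : Set W | IsCompleteBipartiteSet H T ∧ S ⊆ T}, T ⊆ T' → T = T' :=
    fun T' h1 h2 => subset_antisymm h2 (hmax0 h1 h2)
  refine ⟨T, hT.2, hT.1, ?_⟩
  intro T' hT' hsub
  exact (hmax T' ⟨hT', hT.2.trans hsub⟩ hsub).symm


lemma cb_mem {G : SimpleGraph V} {S X Y : Set V} (hS : S = X ∪ Y) {a : V} (ha : a ∈ S) :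
    a ∈ X ∨ a ∈ Y := by
  rw [hS] at ha; exact ha

lemma cb_tri {G : SimpleGraph V} {S : Set V} (hS : IsCompleteBipartiteSet G S) {a b c : V}
    (ha : a ∈ S) (hb : b ∈ S) (hc : c ∈ S) (hab : G.Adj a b) (hbc : G.Adj b c)
    (hac : G.Adj a c) : False := by
  obtain ⟨X, Y, -, -, hSe, hd, hadj⟩ := hS
  have h1 := (hadj a ha b hb).mp hab
  have h2 := (hadj b hb c hc).mp hbc
  have h3 := (hadj a ha c hc).mp hac
  have da : a ∈ X → a ∉ Y := fun h => Set.disjoint_left.mp hd h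
  have db : b ∈ X → b ∉ Y := fun h => Set.disjoint_left.mp hd h
  have dc : c ∈ X → c ∉ Y := fun h => Set.disjoint_left.mp hd h
  tauto

lemma cb_four {G : SimpleGraph V} {S : Set V} (hS : IsCompleteBipartiteSet G S) {a b c d : V}
    (ha : a ∈ S) (hb : b ∈ S) (hc : c ∈ S) (hd' : d ∈ S) (hab : G.Adj a b) (hac : G.Adj a c)
    (hbd : G.Adj b d) : G.Adj c d := by
  obtain ⟨X, Y, -, -, hSe, hd, hadj⟩ := hS
  have h1 := (hadj a ha b hb).mp hab
  have h2 := (hadj a ha c hc).mp hac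
  have h3 := (hadj b hb d hd').mp hbd
  have da : a ∈ X → a ∉ Y := fun h => Set.disjoint_left.mp hd h
  have db : b ∈ X → b ∉ Y := fun h => Set.disjoint_left.mp hd h
  have dc : c ∈ X → c ∉ Y := fun h => Set.disjoint_left.mp hd h
  have dd : d ∈ X → d ∉ Y := fun h => Set.disjoint_left.mp hd h
  rw [hadj c hc d hd']
  tauto

lemma cb_three {G : SimpleGraph V} {S : Set V} (hS : IsCompleteBipartiteSet G S) {a b c : V}
    (ha : a ∈ S) (hb : b ∈ S) (hc : c ∈ S) (hab : G.Adj a b) : G.Adj c a ∨ G.Adj c b := by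
  obtain ⟨X, Y, -, -, hSe, hd, hadj⟩ := hS
  have h1 := (hadj a ha b hb).mp hab
  have hc' := cb_mem (G := G) hSe hc
  rw [hadj c hc a ha, hadj c hc b hb]
  tauto

lemma cb_nbr {G : SimpleGraph V} {S : Set V} (hS : IsCompleteBipartiteSet G S) {a : V}
    (ha : a ∈ S) : ∃ c ∈ S, G.Adj c a := by
  obtain ⟨X, Y, ⟨x, hx⟩, ⟨y, hy⟩, hSe, hd, hadj⟩ := hS
  have hxS : x ∈ S := by rw [hSe]; exact Or.inl hx
  have hyS : y ∈ S := by rw [hSe]; exact Or.inr hy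
  rcases cb_mem (G := G) hSe ha with haX | haY
  · exact ⟨y, hyS, (hadj y hyS a ha).mpr (Or.inr ⟨hy, haX⟩)⟩
  · exact ⟨x, hxS, (hadj x hxS a ha).mpr (Or.inl ⟨hx, haY⟩)⟩

lemma cb_side {G : SimpleGraph V} {S : Set V} (hS : IsCompleteBipartiteSet G S) {a b : V}
    (ha : a ∈ S) (hb : b ∈ S) (hn : ¬ G.Adj a b) : ∃ c ∈ S, G.Adj c a ∧ G.Adj c b := by
  obtain ⟨X, Y, ⟨x, hx⟩, ⟨y, hy⟩, hSe, hd, hadj⟩ := hS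
  have hxS : x ∈ S := by rw [hSe]; exact Or.inl hx
  have hyS : y ∈ S := by rw [hSe]; exact Or.inr hy
  rcases cb_mem (G := G) hSe ha with haX | haY <;> rcases cb_mem (G := G) hSe hb with hbX | hbY
  · exact ⟨y, hyS, (hadj y hyS a ha).mpr (Or.inr ⟨hy, haX⟩), (hadj y hyS b hb).mpr (Or.inr ⟨hy, hbX⟩)⟩
  · exact absurd ((hadj a ha b hb).mpr (Or.inl ⟨haX, hbY⟩)) hn
  · exact absurd ((hadj a ha b hb).mpr (Or.inr ⟨haY, hbX⟩)) hn
  · exact ⟨x, hxS, (hadj x hxS a ha).mpr (Or.inl ⟨hx, haY⟩), (hadj x hxS b hb).mpr (Or.inl ⟨hx, hbY⟩)⟩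

lemma cb_star {G : SimpleGraph V} {w z r : V} (hwz : G.Adj w z) (hwr : G.Adj w r)
    (hzr : ¬ G.Adj z r) (hne : z ≠ r) : IsCompleteBipartiteSet G {w, z, r} := by
  have h1 : w ≠ z := hwz.ne
  have h2 : w ≠ r := hwr.ne
  have h3 : z ≠ w := h1.symm
  have h4 : r ≠ w := h2.symm
  have h5 : r ≠ z := hne.symm
  have h6 : ¬ G.Adj r z := fun h => hzr h.symm
  have h7 : G.Adj z w := hwz.symm
  have h8 : G.Adj r w := hwr.symm
  refine ⟨{w}, {z, r}, Set.singleton_nonempty _, Set.insert_nonempty _ _,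
    by rw [Set.singleton_union], Set.disjoint_singleton_left.mpr (by simp [h1, h2]), ?_⟩
  intro p hp q hq
  simp only [Set.mem_insert_iff, Set.mem_singleton_iff] at hp hq ⊢
  rcases hp with rfl | rfl | rfl <;> rcases hq with rfl | rfl | rfl <;> simp_all

section Bic

variable {W : Type*} [Fintype W] {H : SimpleGraph W} {G : SimpleGraph V}

lemma nbr_of_meets (iso : G ≃g KB H) {v : V} {D : Set W} (hD : IsBiclique H D)
    (hne : D ≠ (iso v).1) (hm : (D ∩ (iso v).1).Nonempty) :
    ∃ d, d ∈ G.neighborSet v ∧ (iso d).1 = D := by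
  refine ⟨iso.symm ⟨D, hD⟩, ?_, by rw [iso.apply_symm_apply]⟩
  have hadj : (KB H).Adj ⟨D, hD⟩ (iso v) := ⟨fun h => hne (congrArg Subtype.val h), hm⟩
  have h2 : G.Adj (iso.symm ⟨D, hD⟩) v := iso.map_adj_iff.mp (by rw [iso.apply_symm_apply]; exact hadj)
  exact (mem_neighborSet _ _ _).mpr h2.symm

lemma half_lemma {Bv C C' : Set W} (hv : IsBiclique H Bv) (hC : IsBiclique H C)
    (hC' : IsBiclique H C') (hCv : C ≠ Bv) (hmeet : (C ∩ Bv).Nonempty)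
    (hnb : ∀ D, IsBiclique H D → D ≠ Bv → (D ∩ Bv).Nonempty → D = C ∨ D = C')
    (hdisj : ¬ (C ∩ C').Nonempty) : ∃ w ∈ C, w ∈ Bv ∧ ∀ r ∈ Bv, H.Adj w r → r ∈ C := by
  classical
  have hCC' : ∀ x, x ∈ C → x ∈ C' → False := fun x h1 h2 => hdisj ⟨x, h1, h2⟩
  obtain ⟨z, hzC, hzv, w, hwC, hwv, hzw⟩ : ∃ z ∈ C, z ∉ Bv ∧ ∃ w ∈ C, w ∈ Bv ∧ H.Adj z w := by
    have hnsub : ¬ C ⊆ Bv := fun hsub => hCv (hC.2 Bv hv.1 hsub).symm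
    obtain ⟨a, haC, hav⟩ := Set.not_subset.mp hnsub
    obtain ⟨p, hpC, hpv⟩ := hmeet
    by_cases hap : H.Adj a p
    · exact ⟨a, haC, hav, p, hpC, hpv, hap⟩
    · obtain ⟨c, hcC, hca, hcp⟩ := cb_side hC.1 haC hpC hap
      by_cases hcv : c ∈ Bv
      · exact ⟨a, haC, hav, c, hcC, hcv, hca.symm⟩
      · exact ⟨c, hcC, hcv, p, hpC, hpv, hcp⟩
  refine ⟨w, hwC, hwv, fun r hr hwr => ?_⟩
  have hzr' : z ≠ r := fun h => hzv (h ▸ hr)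
  have ext : ∀ S, IsCompleteBipartiteSet H S → z ∈ S → ∀ y ∈ S, y ∈ Bv →
      ∃ D, S ⊆ D ∧ (D = C ∨ D = C') := by
    intro S hS hzS y hyS hyv
    obtain ⟨D, hSD, hD⟩ := exists_biclique_superset H hS
    exact ⟨D, hSD, hnb D hD (fun h => hzv (h ▸ hSD hzS)) ⟨y, hSD hyS, hyv⟩⟩
  by_cases hzr : H.Adj z r
  · exfalso
    obtain ⟨D1, h1, hD1⟩ := ext {z, w} (pair_isCompleteBipartiteSet H hzw.ne hzw) (by simp) w
      (by simp) hwv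
    obtain ⟨D2, h2, hD2⟩ := ext {z, r} (pair_isCompleteBipartiteSet H hzr.ne hzr) (by simp) r
      (by simp) hr
    rcases hD1 with hd1 | hd1 <;> rcases hD2 with hd2 | hd2 <;> rw [hd1] at h1 <;> rw [hd2] at h2
    · exact cb_tri hC.1 (h1 (by simp)) (h1 (by simp)) (h2 (by simp)) hzw hwr hzr
    · exact hCC' z (h1 (by simp)) (h2 (by simp))
    · exact hCC' z (h2 (by simp)) (h1 (by simp))
    · exact cb_tri hC'.1 (h1 (by simp)) (h1 (by simp)) (h2 (by simp)) hzw hwr hzr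
  · obtain ⟨D, hD, hDC⟩ := ext {w, z, r} (cb_star hzw.symm hwr hzr hzr') (by simp) w (by simp) hwv
    rcases hDC with h | h
    · rw [h] at hD; exact hD (by simp)
    · rw [h] at hD; exact (hCC' z hzC (hD (by simp))).elim

/-- Triangle lemma: the two neighbors of a degree-two vertex of a biclique
graph are adjacent. -/
lemma adj_of_neighborSet_pair (iso : G ≃g KB H) {v x y : V}
    (hN : G.neighborSet v = {x, y}) (hxy : x ≠ y) : G.Adj x y := by
  classical
  have hvx : G.Adj v x := by
    rw [← mem_neighborSet, hN]; exact Set.mem_insert _ _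
  have hvy : G.Adj v y := by
    rw [← mem_neighborSet, hN]; exact Set.mem_insert_iff.mpr (Or.inr rfl)
  have hnb : ∀ D, IsBiclique H D → D ≠ (iso v).1 → (D ∩ (iso v).1).Nonempty →
      D = (iso x).1 ∨ D = (iso y).1 := by
    intro D hD hne hm
    obtain ⟨d, hd, hdD⟩ := nbr_of_meets iso hD hne hm
    rw [hN] at hd
    simp only [Set.mem_insert_iff, Set.mem_singleton_iff] at hd
    rcases hd with hd | hd
    · left; rw [← hdD, hd]
    · right; rw [← hdD, hd]
  have hXYne : iso x ≠ iso y := fun h => hxy (iso.toEquiv.injective h)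
  refine iso.map_adj_iff.mp ⟨hXYne, ?_⟩
  by_contra hemp
  have hne_x : (iso x).1 ≠ (iso v).1 := fun h => hvx.ne (iso.toEquiv.injective (Subtype.ext h)).symm
  have hne_y : (iso y).1 ≠ (iso v).1 := fun h => hvy.ne (iso.toEquiv.injective (Subtype.ext h)).symm
  have hmx : ((iso x).1 ∩ (iso v).1).Nonempty := (iso.map_adj_iff.mpr hvx.symm).2
  have hmy : ((iso y).1 ∩ (iso v).1).Nonempty := (iso.map_adj_iff.mpr hvy.symm).2
  obtain ⟨w, hwx, hwv, hw⟩ := half_lemma (iso v).2 (iso x).2 (iso y).2 hne_x hmx hnb hemp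
  obtain ⟨w', hw'y, hw'v, hw'⟩ := half_lemma (iso v).2 (iso y).2 (iso x).2 hne_y hmy
    (fun D hD h1 h2 => (hnb D hD h1 h2).symm) (by rwa [Set.inter_comm])
  by_cases hww : H.Adj w w'
  · exact hemp ⟨w', hw w' hw'v hww, hw'y⟩
  · obtain ⟨c, hcv, hcw, hcw'⟩ := cb_side (iso v).2.1 hwv hw'v hww
    exact hemp ⟨c, hw c hcv hcw.symm, hw' c hcv hcw'.symm⟩

/-- Two disjoint bicliques whose only common neighbouring biclique is `E`
have no edge between them. -/
lemma no_edge_between {P Q E : Set W} (hP : IsBiclique H P) (hQ : IsBiclique H Q)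
    (hdisj : ∀ x, x ∈ P → x ∉ Q)
    (huniq : ∀ D, IsBiclique H D → (D ∩ P).Nonempty → (D ∩ Q).Nonempty → D = E)
    {m t : W} (hm : m ∈ P) (ht : t ∈ Q) (hmt : H.Adj m t) : False := by
  classical
  have hE : ∀ S, IsCompleteBipartiteSet H S → (S ∩ P).Nonempty → (S ∩ Q).Nonempty →
      S ⊆ E ∧ IsCompleteBipartiteSet H E := by
    intro S hS h1 h2
    obtain ⟨D, hSD, hD⟩ := exists_biclique_superset H hS
    have hDE := huniq D hD (h1.mono (Set.inter_subset_inter_left _ hSD))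
      (h2.mono (Set.inter_subset_inter_left _ hSD))
    rw [← hDE]
    exact ⟨hSD, hD.1⟩
  obtain ⟨t', ht'Q, ht't⟩ := cb_nbr hQ.1 ht
  have hmt' : m ≠ t' := fun h => hdisj m hm (h ▸ ht'Q)
  have hEmt := hE {m, t} (pair_isCompleteBipartiteSet H hmt.ne hmt) ⟨m, by simp, hm⟩
    ⟨t, by simp, ht⟩
  have hEc := hEmt.2
  have hmE : m ∈ E := hEmt.1 (by simp)
  have htE : t ∈ E := hEmt.1 (by simp)
  have hnmt' : ¬ H.Adj m t' := by
    intro h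
    have h2 := (hE {m, t'} (pair_isCompleteBipartiteSet H h.ne h) ⟨m, by simp, hm⟩
      ⟨t', by simp, ht'Q⟩).1
    exact cb_tri hEc hmE htE (h2 (by simp)) hmt ht't.symm h
  have ht'E : t' ∈ E := (hE {t, m, t'} (cb_star hmt.symm ht't.symm hnmt' hmt')
    ⟨m, by simp, hm⟩ ⟨t, by simp, ht⟩).1 (by simp)
  have ht'P : t' ∉ P := fun h => hdisj t' h ht'Q
  have key : ∀ X Y : Set W, Y.Nonempty → P = X ∪ Y → Disjoint X Y →
      (∀ a ∈ P, ∀ b ∈ P, (H.Adj a b ↔ ((a ∈ X ∧ b ∈ Y) ∨ (a ∈ Y ∧ b ∈ X)))) → m ∈ X →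
      False := by
    intro X Y hYne hPeq hXY hPadj hmX
    have hYP : ∀ y ∈ Y, y ∈ P := fun y hy => by rw [hPeq]; exact Or.inr hy
    have hXP : ∀ x ∈ X, x ∈ P := fun x hx => by rw [hPeq]; exact Or.inl hx
    have ht'Y : t' ∉ Y := fun h => ht'P (hYP _ h)
    have hmy : ∀ y ∈ Y, H.Adj m y := fun y hy =>
      (hPadj m hm y (hYP y hy)).mpr (Or.inl ⟨hmX, hy⟩)
    have hyE : ∀ y ∈ Y, y ∈ E ∧ ¬ H.Adj t y := by
      intro y hy
      have hty : ¬ H.Adj t y := by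
        intro h
        have h2 := (hE {t, y} (pair_isCompleteBipartiteSet H h.ne h) ⟨y, by simp, hYP y hy⟩
          ⟨t, by simp, ht⟩).1
        exact cb_tri hEc hmE htE (h2 (by simp)) hmt h (hmy y hy)
      have hty' : t ≠ y := fun h => hdisj y (hYP y hy) (h ▸ ht)
      exact ⟨(hE {m, t, y} (cb_star hmt (hmy y hy) hty hty') ⟨m, by simp, hm⟩
        ⟨t, by simp, ht⟩).1 (by simp), hty⟩
    have ht'y : ∀ y ∈ Y, H.Adj t' y := by
      intro y hy
      exact (cb_four hEc hmE htE (hyE y hy).1 ht'E hmt (hmy y hy) ht't.symm).symm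
    have ht'x : ∀ x ∈ X, ¬ H.Adj t' x := by
      intro x hx h
      obtain ⟨y0, hy0⟩ := hYne
      have h2 := (hE {x, t'} (pair_isCompleteBipartiteSet H h.ne.symm h.symm)
        ⟨x, by simp, hXP x hx⟩ ⟨t', by simp, ht'Q⟩).1
      exact cb_tri hEc (h2 (by simp)) ht'E (hyE y0 hy0).1 h.symm (ht'y y0 hy0)
        ((hPadj x (hXP x hx) y0 (hYP y0 hy0)).mpr (Or.inl ⟨hx, hy0⟩))
    have hT : IsCompleteBipartiteSet H (insert t' P) := by
      refine ⟨insert t' X, Y, Set.insert_nonempty _ _, hYne, by rw [hPeq, Set.insert_union], ?_, ?_⟩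
      · rw [Set.disjoint_insert_left]
        exact ⟨ht'Y, hXY⟩
      · intro a ha b hb
        rw [Set.mem_insert_iff] at ha hb
        rcases ha with ha | ha <;> rcases hb with hb | hb
        · rw [ha, hb]
          exact iff_of_false (H.irrefl) (fun h => by
            rcases h with h | h
            · exact ht'Y h.2
            · exact ht'Y h.1)
        · rw [ha]
          rcases cb_mem (G := H) hPeq hb with hbX | hbY
          · exact iff_of_false (ht'x b hbX) (fun h => by
              rcases h with h | h
              · exact Set.disjoint_left.mp hXY hbX h.2
              · exact ht'Y h.1)
          · exact iff_of_true (ht'y b hbY) (Or.inl ⟨Set.mem_insert _ _, hbY⟩)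
        · rw [hb]
          rcases cb_mem (G := H) hPeq ha with haX | haY
          · exact iff_of_false (fun h => ht'x a haX h.symm) (fun h => by
              rcases h with h | h
              · exact ht'Y h.2
              · exact Set.disjoint_left.mp hXY haX h.1)
          · exact iff_of_true (ht'y a haY).symm (Or.inr ⟨haY, Set.mem_insert _ _⟩)
        · have hat : a ≠ t' := fun h => ht'P (h ▸ ha)
          have hbt : b ≠ t' := fun h => ht'P (h ▸ hb)
          rw [hPadj a ha b hb]
          simp only [Set.mem_insert_iff, hat, hbt, false_or]
    have := hP.2 _ hT (Set.subset_insert _ _)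
    exact ht'P (by rw [← this]; exact Set.mem_insert _ _)
  obtain ⟨X, Y, hXne, hYne, hPeq, hXY, hPadj⟩ := hP.1
  rcases cb_mem (G := H) hPeq hm with hmX | hmY
  · exact key X Y hYne hPeq hXY hPadj hmX
  · exact key Y X hXne (by rw [hPeq, Set.union_comm]) hXY.symm
      (fun a ha b hb => (hPadj a ha b hb).trans or_comm) hmY

/-- A biclique graph contains no triangle `a b c` together with three pairwise
nonadjacent degree-two vertices attached to its three edges. -/
lemma no_hajos (iso : G ≃g KB H) {u0 u1 u2 a b c : V}
    (hN0 : G.neighborSet u0 = {a, b}) (hN1 : G.neighborSet u1 = {b, c})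
    (hN2 : G.neighborSet u2 = {a, c})
    (hab : a ≠ b) (hbc : b ≠ c) (hac : a ≠ c) (hnadj : ¬ G.Adj u0 u1) (hne : u0 ≠ u1)
    (h0c : u0 ≠ c) : False := by
  classical
  have disj : ∀ u u', u ≠ u' → ¬ G.Adj u u' → ∀ w, w ∈ (iso u).1 → w ∉ (iso u').1 := by
    intro u u' hne hna w hw hw'
    exact hna (iso.map_adj_iff.mp ⟨fun h => hne (iso.toEquiv.injective h), ⟨w, hw, hw'⟩⟩)
  have uniq : ∀ u u' e, u ≠ u' → ¬ G.Adj u u' →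
      (∀ d, d ∈ G.neighborSet u → d ∈ G.neighborSet u' → d = e) →
      ∀ D, IsBiclique H D → (D ∩ (iso u).1).Nonempty → (D ∩ (iso u').1).Nonempty →
        D = (iso e).1 := by
    intro u u' e hne hna hc D hD h1 h2
    have hDu : D ≠ (iso u).1 := by
      intro h
      obtain ⟨w, hw1, hw2⟩ := h2
      rw [h] at hw1
      exact disj u u' hne hna w hw1 hw2
    obtain ⟨d, hd, hdD⟩ := nbr_of_meets iso hD hDu h1
    have hDu' : D ≠ (iso u').1 := by
      intro h
      obtain ⟨w, hw1, hw2⟩ := h1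
      rw [h] at hw1
      exact disj u u' hne hna w hw2 hw1
    obtain ⟨d', hd', hdD'⟩ := nbr_of_meets iso hD hDu' h2
    have hdd : d = d' := iso.toEquiv.injective (Subtype.ext (hdD.trans hdD'.symm))
    rw [← hdd] at hd'
    rw [← hdD, hc d hd hd']
  have m0a : a ∈ G.neighborSet u0 := by rw [hN0]; exact Set.mem_insert _ _
  have m0b : b ∈ G.neighborSet u0 := by rw [hN0]; exact Set.mem_insert_iff.mpr (Or.inr rfl)
  have m1b : b ∈ G.neighborSet u1 := by rw [hN1]; exact Set.mem_insert _ _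
  have m2a : a ∈ G.neighborSet u2 := by rw [hN2]; exact Set.mem_insert _ _
  have h02ne : u0 ≠ u2 := by
    intro h
    have h1 := m0b
    rw [h, hN2] at h1
    simp only [Set.mem_insert_iff, Set.mem_singleton_iff] at h1
    rcases h1 with h1 | h1
    · exact hab h1.symm
    · exact hbc h1
  have h02na : ¬ G.Adj u0 u2 := by
    intro h
    have h1 : u2 ∈ G.neighborSet u0 := (mem_neighborSet _ _ _).mpr h
    rw [hN0] at h1
    simp only [Set.mem_insert_iff, Set.mem_singleton_iff] at h1
    rcases h1 with h1 | h1
    · rw [h1] at m2a; exact G.irrefl ((mem_neighborSet _ _ _).mp m2a)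
    · have h2 : u0 ∈ G.neighborSet u2 := (mem_neighborSet _ _ _).mpr h.symm
      rw [hN2] at h2
      simp only [Set.mem_insert_iff, Set.mem_singleton_iff] at h2
      rcases h2 with h2 | h2
      · rw [h2] at m0a; exact G.irrefl ((mem_neighborSet _ _ _).mp m0a)
      · exact h0c h2
  have U02 := uniq u0 u2 a h02ne h02na (by
    intro d h0 h2
    rw [hN0] at h0
    rw [hN2] at h2
    simp only [Set.mem_insert_iff, Set.mem_singleton_iff] at h0 h2
    rcases h0 with h0 | h0
    · exact h0
    · rcases h2 with h2 | h2
      · exact absurd (h2.symm.trans h0) hab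
      · exact absurd (h0.symm.trans h2) hbc)
  have U01 := uniq u0 u1 b hne hnadj (by
    intro d h0 h1
    rw [hN0] at h0
    rw [hN1] at h1
    simp only [Set.mem_insert_iff, Set.mem_singleton_iff] at h0 h1
    rcases h0 with h0 | h0
    · rcases h1 with h1 | h1
      · exact absurd (h0.symm.trans h1) hab
      · exact absurd (h0.symm.trans h1) hac
    · exact h0)
  have NE02 : ∀ p ∈ (iso u0).1, ∀ q ∈ (iso u2).1, ¬ H.Adj p q := fun p hp q hq h =>
    no_edge_between (iso u0).2 (iso u2).2 (disj u0 u2 h02ne h02na) U02 hp hq h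
  have NE01 : ∀ p ∈ (iso u0).1, ∀ q ∈ (iso u1).1, ¬ H.Adj p q := fun p hp q hq h =>
    no_edge_between (iso u0).2 (iso u1).2 (disj u0 u1 hne hnadj) U01 hp hq h
  obtain ⟨s1, hs1_0, hs1_a⟩ := (iso.map_adj_iff.mpr ((mem_neighborSet _ _ _).mp m0a)).2
  obtain ⟨s3, hs3_2, hs3_a⟩ := (iso.map_adj_iff.mpr ((mem_neighborSet _ _ _).mp m2a)).2
  obtain ⟨s2, hs2_1, hs2_b⟩ := (iso.map_adj_iff.mpr ((mem_neighborSet _ _ _).mp m1b)).2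
  have hs13 : ¬ H.Adj s1 s3 := NE02 s1 hs1_0 s3 hs3_2
  obtain ⟨m, hmA, hm1, hm3⟩ := cb_side (iso a).2.1 hs1_a hs3_a hs13
  have hm0 : m ∉ (iso u0).1 := fun h => NE02 m h s3 hs3_2 hm3
  obtain ⟨r, hr0, hr1⟩ := cb_nbr (iso u0).2.1 hs1_0
  have hr3 : ¬ H.Adj r s3 := NE02 r hr0 s3 hs3_2
  have hr3ne : s3 ≠ r := fun h => disj u0 u2 h02ne h02na r hr0 (h ▸ hs3_2)
  by_cases hmr : H.Adj m r
  · obtain ⟨D, hSD, hD⟩ := exists_biclique_superset H (cb_star hm3 hmr (fun h => hr3 h.symm) hr3ne)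
    have hDa : D = (iso a).1 := U02 D hD ⟨r, hSD (by simp), hr0⟩ ⟨s3, hSD (by simp), hs3_2⟩
    have hrA : r ∈ (iso a).1 := by rw [← hDa]; exact hSD (by simp)
    exact cb_tri (iso a).2.1 hs1_a hrA hmA hr1.symm hmr.symm hm1.symm
  · have hmrne : m ≠ r := fun h => hm0 (h ▸ hr0)
    obtain ⟨D, hSD, hD⟩ := exists_biclique_superset H (cb_star hm1.symm hr1.symm hmr hmrne)
    have hDne : D ≠ (iso u0).1 := fun h => hm0 (by rw [← h]; exact hSD (by simp))
    obtain ⟨d, hd, hdD⟩ := nbr_of_meets iso hD hDne ⟨s1, hSD (by simp), hs1_0⟩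
    rw [hN0] at hd
    simp only [Set.mem_insert_iff, Set.mem_singleton_iff] at hd
    rcases hd with hd | hd
    · rw [hd] at hdD
      have hrA : r ∈ (iso a).1 := by rw [hdD]; exact hSD (by simp)
      exact hr3 (cb_four (iso a).2.1 hs1_a hmA hrA hs3_a hm1.symm hr1.symm hm3)
    · rw [hd] at hdD
      have hs1B : s1 ∈ (iso b).1 := by rw [hdD]; exact hSD (by simp)
      have hrB : r ∈ (iso b).1 := by rw [hdD]; exact hSD (by simp)
      rcases cb_three (iso b).2.1 hs1B hrB hs2_b hr1.symm with h | h
      · exact NE01 s1 hs1_0 s2 hs2_1 h.symm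
      · exact NE01 r hr0 s2 hs2_1 h.symm

end Bic

lemma pair_eq_of_mem {α : Type*} {x y p q : α} (hp : p ∈ ({x, y} : Set α))
    (hq : q ∈ ({x, y} : Set α)) (hpq : p ≠ q) : ({x, y} : Set α) = {p, q} := by
  simp only [Set.mem_insert_iff, Set.mem_singleton_iff] at hp hq
  rcases hp with rfl | rfl <;> rcases hq with rfl | rfl
  · exact absurd rfl hpq
  · rfl
  · exact Set.pair_comm _ _
  · exact absurd rfl hpq

/-- In a biclique graph `G = KB(H)` (with `G` neither `K₃` nor the diamond), the family
of closed neighborhoods of the degree-`2` vertices is Helly: every nonempty subfamily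
of pairwise intersecting members has a common element. -/
theorem closed_neighborhoods_degree_two_helly
    {V W : Type*} [Fintype V] [Fintype W] (H : SimpleGraph W) (G : SimpleGraph V)
    [DecidableRel G.Adj] (iso : G ≃g KB H)
    (hK3 : IsEmpty (G ≃g (⊤ : SimpleGraph (Fin 3))))
    (hdia : IsEmpty (G ≃g diamondGraph)) :
    ∀ 𝓑 : Set (Set V),
      (∀ S ∈ 𝓑, ∃ v : V, G.degree v = 2 ∧ S = insert v (G.neighborSet v)) →
      (∀ S ∈ 𝓑, ∀ T ∈ 𝓑, (S ∩ T).Nonempty) →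
      𝓑.Nonempty → (⋂₀ 𝓑).Nonempty := by
  classical
  intro 𝓑 hmem hpair hne
  choose ctr hdeg hins using hmem
  have hNpair : ∀ S (hS : S ∈ 𝓑), ∃ x y : V, x ≠ y ∧
      G.neighborSet (ctr S hS) = {x, y} := by
    intro S hS
    obtain ⟨x, y, hxy, hf⟩ := Finset.card_eq_two.mp (hdeg S hS)
    refine ⟨x, y, hxy, ?_⟩
    have h1 : ((G.neighborFinset (ctr S hS) : Finset V) : Set V) = (({x, y} : Finset V) : Set V) :=
      congrArg _ hf
    simpa [Set.coe_toFinset, neighborFinset_def] using h1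
  choose nx ny hxy hN using hNpair
  have hsubN : ∀ S (hS : S ∈ 𝓑), G.neighborSet (ctr S hS) ⊆ S := by
    intro S hS w hw
    rw [hins S hS]
    exact Set.mem_insert_iff.mpr (Or.inr hw)
  have htri : ∀ S (hS : S ∈ 𝓑), G.Adj (nx S hS) (ny S hS) := fun S hS =>
    adj_of_neighborSet_pair iso (hN S hS) (hxy S hS)
  -- half of the pairwise-intersection lemma
  have hhalf : ∀ S (hS : S ∈ 𝓑) T (hT : T ∈ 𝓑),
      ctr S hS ∈ G.neighborSet (ctr T hT) →
      (G.neighborSet (ctr S hS) ∩ G.neighborSet (ctr T hT)).Nonempty := by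
    intro S hS T hT hm
    rw [hN T hT] at hm
    simp only [Set.mem_insert_iff, Set.mem_singleton_iff] at hm
    rcases hm with hm | hm
    · refine ⟨ny T hT, ?_, ?_⟩
      · rw [mem_neighborSet, hm]
        exact htri T hT
      · rw [hN T hT]
        exact Set.mem_insert_iff.mpr (Or.inr rfl)
    · refine ⟨nx T hT, ?_, ?_⟩
      · rw [mem_neighborSet, hm]
        exact (htri T hT).symm
      · rw [hN T hT]
        exact Set.mem_insert _ _
  -- the neighbor pairs pairwise intersect
  have hPI : ∀ S (hS : S ∈ 𝓑) T (hT : T ∈ 𝓑),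
      (G.neighborSet (ctr S hS) ∩ G.neighborSet (ctr T hT)).Nonempty := by
    intro S hS T hT
    obtain ⟨m, hmS, hmT⟩ := hpair S hS T hT
    rw [hins S hS] at hmS
    rw [hins T hT] at hmT
    rcases Set.mem_insert_iff.mp hmS with rfl | hmS'
    · rcases Set.mem_insert_iff.mp hmT with heq | hmT'
      · rw [heq]
        refine ⟨nx T hT, ?_, ?_⟩ <;> rw [hN T hT] <;> exact Set.mem_insert _ _
      · exact hhalf S hS T hT hmT'
    · rcases Set.mem_insert_iff.mp hmT with heq | hmT'
      · obtain ⟨z, hz1, hz2⟩ := hhalf T hT S hS (by rw [← heq]; exact hmS')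
        exact ⟨z, hz2, hz1⟩
      · exact ⟨m, hmS', hmT'⟩
  obtain ⟨S0, hS0⟩ := hne
  -- case 1 : a := nx S0 hS0 is in every neighbor pair
  by_cases hca : ∀ S (hS : S ∈ 𝓑), nx S0 hS0 ∈ G.neighborSet (ctr S hS)
  · exact ⟨nx S0 hS0, fun S hS => hsubN S hS (hca S hS)⟩
  push_neg at hca
  obtain ⟨S1, hS1, ha1⟩ := hca
  -- the pair of S1 contains b := ny S0 hS0
  have hb1 : ny S0 hS0 ∈ G.neighborSet (ctr S1 hS1) := by
    obtain ⟨m, hm1, hm0⟩ := hPI S1 hS1 S0 hS0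
    rw [hN S0 hS0] at hm0
    rcases Set.mem_insert_iff.mp hm0 with rfl | hm0'
    · exact absurd hm1 ha1
    · rw [← Set.mem_singleton_iff.mp hm0']
      exact hm1
  obtain ⟨c, hN1, hcb, hca'⟩ : ∃ c, G.neighborSet (ctr S1 hS1) = {ny S0 hS0, c} ∧
      c ≠ ny S0 hS0 ∧ c ≠ nx S0 hS0 := by
    have hb1' : ny S0 hS0 ∈ ({nx S1 hS1, ny S1 hS1} : Set V) := by
      rw [← hN S1 hS1]; exact hb1
    have key : ∀ z, G.neighborSet (ctr S1 hS1) = {ny S0 hS0, z} → z ≠ ny S0 hS0 →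
        ∃ c, G.neighborSet (ctr S1 hS1) = {ny S0 hS0, c} ∧ c ≠ ny S0 hS0 ∧ c ≠ nx S0 hS0 := by
      intro z hz hzb
      refine ⟨z, hz, hzb, fun h => ha1 ?_⟩
      rw [hz, h]
      exact Set.mem_insert_iff.mpr (Or.inr rfl)
    simp only [Set.mem_insert_iff, Set.mem_singleton_iff] at hb1'
    rcases hb1' with h' | h'
    · refine key (ny S1 hS1) (by rw [hN S1 hS1, h']) (fun h => hxy S1 hS1 ?_)
      rw [← h']
      exact h.symm
    · refine key (nx S1 hS1) (by rw [hN S1 hS1, h', Set.pair_comm]) (fun h => hxy S1 hS1 ?_)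
      rw [h]
      exact h'
  by_cases hu1a : ctr S1 hS1 = nx S0 hS0
  · -- degenerate case: the component of a is a triangle {a, b, c}
    have hNa : G.neighborSet (nx S0 hS0) = {ny S0 hS0, c} := by rw [← hu1a]; exact hN1
    have hu0a : G.Adj (ctr S0 hS0) (nx S0 hS0) := by
      rw [← mem_neighborSet, hN S0 hS0]; exact Set.mem_insert _ _
    have hu0c : ctr S0 hS0 = c := by
      have h1 : ctr S0 hS0 ∈ ({ny S0 hS0, c} : Set V) := by
        rw [← hNa]; exact hu0a.symm
      simp only [Set.mem_insert_iff, Set.mem_singleton_iff] at h1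
      rcases h1 with h | h
      · exfalso
        have := hu0a
        rw [h] at this
        have hb : G.Adj (ny S0 hS0) (nx S0 hS0) := this
        have : ny S0 hS0 ∈ G.neighborSet (ctr S0 hS0) := by
          rw [hN S0 hS0]; exact Set.mem_insert_iff.mpr (Or.inr rfl)
        have hadj : G.Adj (ctr S0 hS0) (ny S0 hS0) := this
        rw [h] at hadj
        exact G.irrefl hadj
      · exact h
    have hNc : G.neighborSet c = {nx S0 hS0, ny S0 hS0} := by
      rw [← hu0c]; exact hN S0 hS0
    by_cases hcb' : ∀ S (hS : S ∈ 𝓑), ny S0 hS0 ∈ G.neighborSet (ctr S hS)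
    · exact ⟨ny S0 hS0, fun S hS => hsubN S hS (hcb' S hS)⟩
    push_neg at hcb'
    obtain ⟨S2, hS2, hb2⟩ := hcb'
    have ha2 : nx S0 hS0 ∈ G.neighborSet (ctr S2 hS2) := by
      obtain ⟨m, hm2, hm0⟩ := hPI S2 hS2 S0 hS0
      rw [hN S0 hS0] at hm0
      rcases Set.mem_insert_iff.mp hm0 with rfl | hm0'
      · exact hm2
      · exact absurd (by rw [← Set.mem_singleton_iff.mp hm0']; exact hm2) hb2
    have hc2 : c ∈ G.neighborSet (ctr S2 hS2) := by
      obtain ⟨m, hm2, hm1⟩ := hPI S2 hS2 S1 hS1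
      rw [hN1] at hm1
      rcases Set.mem_insert_iff.mp hm1 with rfl | hm1'
      · exact absurd hm2 hb2
      · rw [← Set.mem_singleton_iff.mp hm1']
        exact hm2
    have hN2 : G.neighborSet (ctr S2 hS2) = {nx S0 hS0, c} := by
      rw [hN S2 hS2]
      refine pair_eq_of_mem ?_ ?_ (Ne.symm hca')
      · rw [← hN S2 hS2]; exact ha2
      · rw [← hN S2 hS2]; exact hc2
    have hu2b : ctr S2 hS2 = ny S0 hS0 := by
      have hu2a : G.Adj (ctr S2 hS2) (nx S0 hS0) := ha2
      have h1 : ctr S2 hS2 ∈ ({ny S0 hS0, c} : Set V) := by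
        rw [← hNa]; exact hu2a.symm
      simp only [Set.mem_insert_iff, Set.mem_singleton_iff] at h1
      rcases h1 with h | h
      · exact h
      · exfalso
        have hadj : G.Adj (ctr S2 hS2) c := hc2
        rw [h] at hadj
        exact G.irrefl hadj
    have hNb : G.neighborSet (ny S0 hS0) = {nx S0 hS0, c} := by
      rw [← hu2b]; exact hN2
    -- now a = nx S0 hS0 belongs to every member of 𝓑
    refine ⟨nx S0 hS0, fun S hS => ?_⟩
    obtain ⟨m, hmS, hm0⟩ := hPI S hS S0 hS0
    rw [hN S0 hS0] at hm0
    have hctr : ctr S hS = nx S0 hS0 ∨ ctr S hS = ny S0 hS0 ∨ ctr S hS = c := by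
      rcases Set.mem_insert_iff.mp hm0 with hm0' | hm0'
      · have h1 : ctr S hS ∈ G.neighborSet (nx S0 hS0) := by
          rw [← hm0']; exact (hmS : G.Adj (ctr S hS) m).symm
        rw [hNa] at h1
        simp only [Set.mem_insert_iff, Set.mem_singleton_iff] at h1
        exact Or.inr h1
      · have hmb : m = ny S0 hS0 := Set.mem_singleton_iff.mp hm0'
        have h1 : ctr S hS ∈ G.neighborSet (ny S0 hS0) := by
          rw [← hmb]; exact (hmS : G.Adj (ctr S hS) m).symm
        rw [hNb] at h1
        simp only [Set.mem_insert_iff, Set.mem_singleton_iff] at h1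
        rcases h1 with h | h
        · exact Or.inl h
        · exact Or.inr (Or.inr h)
    rw [hins S hS]
    rcases hctr with h | h | h
    · rw [h]
      exact Set.mem_insert _ _
    · refine Set.mem_insert_iff.mpr (Or.inr ?_)
      rw [h, hNb]
      exact Set.mem_insert _ _
    · refine Set.mem_insert_iff.mpr (Or.inr ?_)
      rw [h, hNc]
      exact Set.mem_insert _ _
  · -- nondegenerate case: contradiction with the key lemma
    have hu1b : ctr S1 hS1 ≠ ny S0 hS0 := by
      intro h
      have hadj : G.Adj (ctr S1 hS1) (ny S0 hS0) := hb1
      rw [h] at hadj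
      exact G.irrefl hadj
    have hnadj : ¬ G.Adj (ctr S0 hS0) (ctr S1 hS1) := by
      intro h
      have h1 : ctr S1 hS1 ∈ G.neighborSet (ctr S0 hS0) := mem_neighborSet _ _ _ |>.mpr h
      rw [hN S0 hS0] at h1
      simp only [Set.mem_insert_iff, Set.mem_singleton_iff] at h1
      rcases h1 with h' | h'
      · exact hu1a h'
      · exact hu1b h'
    have hne01 : ctr S0 hS0 ≠ ctr S1 hS1 := by
      intro h
      refine ha1 ?_
      rw [← h, hN S0 hS0]
      exact Set.mem_insert _ _
    have h0c : ctr S0 hS0 ≠ c := by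
      intro h
      have h1 : c ∈ G.neighborSet (ctr S1 hS1) := by
        rw [hN1]; exact Set.mem_insert_iff.mpr (Or.inr rfl)
      rw [← h] at h1
      exact hnadj ((mem_neighborSet _ _ _).mp h1).symm
    by_cases hcb2 : ∀ S (hS : S ∈ 𝓑), ny S0 hS0 ∈ G.neighborSet (ctr S hS)
    · exact ⟨ny S0 hS0, fun S hS => hsubN S hS (hcb2 S hS)⟩
    push_neg at hcb2
    obtain ⟨S2, hS2, hb2⟩ := hcb2
    have ha2 : nx S0 hS0 ∈ G.neighborSet (ctr S2 hS2) := by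
      obtain ⟨m, hm2, hm0⟩ := hPI S2 hS2 S0 hS0
      rw [hN S0 hS0] at hm0
      rcases Set.mem_insert_iff.mp hm0 with rfl | hm0'
      · exact hm2
      · exact absurd (by rw [← Set.mem_singleton_iff.mp hm0']; exact hm2) hb2
    have hc2 : c ∈ G.neighborSet (ctr S2 hS2) := by
      obtain ⟨m, hm2, hm1⟩ := hPI S2 hS2 S1 hS1
      rw [hN1] at hm1
      rcases Set.mem_insert_iff.mp hm1 with rfl | hm1'
      · exact absurd hm2 hb2
      · rw [← Set.mem_singleton_iff.mp hm1']
        exact hm2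
    have hN2 : G.neighborSet (ctr S2 hS2) = {nx S0 hS0, c} := by
      rw [hN S2 hS2]
      refine pair_eq_of_mem ?_ ?_ (Ne.symm hca')
      · rw [← hN S2 hS2]; exact ha2
      · rw [← hN S2 hS2]; exact hc2
    exact (no_hajos iso (hN S0 hS0) hN1 hN2 (hxy S0 hS0) hcb.symm hca'.symm hnadj hne01
      h0c).elim
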